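/- Fix c ∈ [0, 3π/2) and define f₁(θ) := 1/cos θ + sin(c − θ − π/2)/cos θ + 1. Then for every θ satisfying c/2 − π/4 ≤ θ ≤ c/2 and 0 ≤ θ < π/2, one has: f₁(θ) ≥ f₁(c/2) if 0 ≤ c ≤ 2π/3; f₁(θ) ≥ f₁(π − c) if 2π/3 < c ≤ 5π/6; and f₁(θ) ≥ f₁(c/2 − π/4) if 5π/6 < c < 3π/2. That is, on this domain f₁ attains its minimum at θ = c/2, θ = π − c, or θ = c/2 − π/4, respectively. -/

import Mathlib

open Real

/-- The length of the Type-1 inspection curve with deployment angle `θ`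
for an arc of length `c`. -/
noncomputable def f1 (c θ : ℝ) : ℝ :=
  1 / Real.cos θ + Real.sin (c - θ - π/2) / Real.cos θ + 1

/-!
Since `sin (c - θ - π/2) = -cos (c - θ)`, one has `f₁(θ) = (1 - cos (c - θ)) / cos θ + 1`,
whose derivative is `(sin θ - sin c) / cos² θ`. Hence on `[0, π/2)` the function `f₁` decreases
while `θ ≤ min c (π - c)` and increases once `θ ≥ π - c`. For `c ≤ 2π/3` the whole feasible
interval lies in the decreasing region, for `c ≥ 5π/6` it lies in the increasing region, and in
between the minimum is at the turning point `π - c`.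
-/

namespace Real

theorem sin_le_sin_of_le_of_le_pi_sub {x c : ℝ} (hx : -(π / 2) ≤ x) (hxc : x ≤ c)
    (hxc' : x ≤ π - c) : sin x ≤ sin c := by
  rcases le_total c (π / 2) with hc | hc
  · exact sin_le_sin_of_le_of_le_pi_div_two hx hc hxc
  · rw [← sin_pi_sub c]
    exact sin_le_sin_of_le_of_le_pi_div_two hx (by linarith) hxc'

theorem sin_le_sin_of_pi_sub_le {x c : ℝ} (hx₀ : 0 ≤ x) (hx : x ≤ π / 2) (hcx : π - c ≤ x)
    (hc : c ≤ 2 * π) : sin c ≤ sin x := by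
  rcases le_total c π with hcπ | hcπ
  · rw [← sin_pi_sub c]
    exact sin_le_sin_of_le_of_le_pi_div_two (by linarith) hx hcx
  · calc sin c = sin (c - 2 * π) := (sin_sub_two_pi c).symm
      _ ≤ 0 := sin_nonpos_of_nonpos_of_neg_pi_le (by linarith) (by linarith)
      _ ≤ sin x := sin_nonneg_of_nonneg_of_le_pi hx₀ (by linarith [pi_pos])

end Real

open Set

theorem f1_eq (c θ : ℝ) : f1 c θ = (1 - cos (c - θ)) / cos θ + 1 := by
  rw [f1, sin_sub_pi_div_two]
  ring

theorem hasDerivAt_f1 (c : ℝ) {x : ℝ} (hx : cos x ≠ 0) :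
    HasDerivAt (f1 c) ((sin x - sin c) / cos x ^ 2) x := by
  have h : HasDerivAt (fun t ↦ (1 - cos (c - t)) / cos t + 1)
      ((-(-sin (c - x) * -1) * cos x - (1 - cos (c - x)) * -sin x) / cos x ^ 2) x := by
    simpa using ((((hasDerivAt_cos (c - x)).comp x ((hasDerivAt_id x).const_sub c)).const_sub
      1).div (hasDerivAt_cos x) hx).add_const 1
  rw [show f1 c = _ from funext (f1_eq c)]
  convert h using 2
  rw [sin_sub, cos_sub]
  linear_combination sin c * sin_sq_add_cos_sq x

variable {c : ℝ} {s : Set ℝ}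

theorem hasDerivWithinAt_f1_interior (hs : s ⊆ Ioo (-(π / 2)) (π / 2)) :
    ∀ x ∈ interior s, HasDerivWithinAt (f1 c) ((sin x - sin c) / cos x ^ 2) (interior s) x :=
  fun _ hx ↦ (hasDerivAt_f1 c (cos_pos_of_mem_Ioo (hs (interior_subset hx))).ne').hasDerivWithinAt

theorem continuousOn_f1 (hs : s ⊆ Ioo (-(π / 2)) (π / 2)) : ContinuousOn (f1 c) s :=
  fun _ hx ↦ (hasDerivAt_f1 c (cos_pos_of_mem_Ioo (hs hx)).ne').continuousAt.continuousWithinAt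

theorem antitoneOn_f1 (hs : Convex ℝ s) (hs_cos : s ⊆ Ioo (-(π / 2)) (π / 2))
    (hsin : ∀ x ∈ interior s, sin x ≤ sin c) : AntitoneOn (f1 c) s :=
  antitoneOn_of_hasDerivWithinAt_nonpos hs (continuousOn_f1 hs_cos)
    (hasDerivWithinAt_f1_interior hs_cos)
    fun x hx ↦ div_nonpos_of_nonpos_of_nonneg (sub_nonpos.2 (hsin x hx)) (sq_nonneg _)

theorem monotoneOn_f1 (hs : Convex ℝ s) (hs_cos : s ⊆ Ioo (-(π / 2)) (π / 2))
    (hsin : ∀ x ∈ interior s, sin c ≤ sin x) : MonotoneOn (f1 c) s :=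
  monotoneOn_of_hasDerivWithinAt_nonneg hs (continuousOn_f1 hs_cos)
    (hasDerivWithinAt_f1_interior hs_cos)
    fun x hx ↦ div_nonneg (sub_nonneg.2 (hsin x hx)) (sq_nonneg _)

theorem antitoneOn_f1_Icc {b : ℝ} (hb : b < π / 2) (hbc : b ≤ c) (hbc' : b ≤ π - c) :
    AntitoneOn (f1 c) (Icc 0 b) := by
  refine antitoneOn_f1 (convex_Icc 0 b)
    (fun x hx ↦ ⟨by linarith [pi_pos, hx.1], by linarith [hx.2]⟩) fun x hx ↦ ?_
  rw [interior_Icc] at hx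
  exact sin_le_sin_of_le_of_le_pi_sub (by linarith [pi_pos, hx.1]) (by linarith [hx.2])
    (by linarith [hx.2])

theorem monotoneOn_f1_Ico {a : ℝ} (ha₀ : 0 ≤ a) (ha : π - c ≤ a) (hc : c ≤ 2 * π) :
    MonotoneOn (f1 c) (Ico a (π / 2)) := by
  refine monotoneOn_f1 (convex_Ico a (π / 2)) (fun x hx ↦ ⟨by linarith [pi_pos, hx.1], hx.2⟩)
    fun x hx ↦ ?_
  rw [interior_Ico] at hx
  exact sin_le_sin_of_pi_sub_le (by linarith [hx.1]) hx.2.le (by linarith [hx.1]) hc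

theorem f1_minimizers_general (c : ℝ) (θ : ℝ)
    (h1 : c/2 - π/4 ≤ θ) (h2 : θ ≤ c/2) (h3 : 0 ≤ θ) (h4 : θ < π/2) :
    (c ≤ 2*π/3 → f1 c (c/2) ≤ f1 c θ) ∧
    (2*π/3 < c → c ≤ 5*π/6 → f1 c (π - c) ≤ f1 c θ) ∧
    (5*π/6 < c → f1 c (c/2 - π/4) ≤ f1 c θ) := by
  have hπ := pi_pos
  refine ⟨fun hc ↦ ?_, fun hc hc' ↦ ?_, fun hc ↦ ?_⟩
  · exact antitoneOn_f1_Icc (by linarith) (by linarith) (by linarith)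
      ⟨h3, h2⟩ ⟨by linarith, le_rfl⟩ h2
  · rcases le_total θ (π - c) with h | h
    · exact antitoneOn_f1_Icc (by linarith) (by linarith) le_rfl ⟨h3, h⟩ ⟨by linarith, le_rfl⟩ h
    · exact monotoneOn_f1_Ico (by linarith) le_rfl (by linarith) ⟨le_rfl, by linarith⟩ ⟨h, h4⟩ h
  · exact monotoneOn_f1_Ico (by linarith) (by linarith) (by linarith) ⟨le_rfl, by linarith⟩
      ⟨h1, h4⟩ h1

theorem f1_minimizers (c : ℝ) (hc0 : 0 ≤ c) (hc1 : c < 3*π/2) (θ : ℝ)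
    (h1 : c/2 - π/4 ≤ θ) (h2 : θ ≤ c/2) (h3 : 0 ≤ θ) (h4 : θ < π/2) :
    (c ≤ 2*π/3 → f1 c (c/2) ≤ f1 c θ) ∧
    (2*π/3 < c → c ≤ 5*π/6 → f1 c (π - c) ≤ f1 c θ) ∧
    (5*π/6 < c → f1 c (c/2 - π/4) ≤ f1 c θ) :=
  f1_minimizers_general c θ h1 h2 h3 h4
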